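/- For positive definite n×n matrices A and B, d_l(A♯B, (A+B)/2) ≤ (1/2) d_l(A,B), where A♯B is the geometric mean and d_l the Log-Determinant metric. -/

import Mathlib

open Matrix ComplexOrder

/-- Matrix power via functional calculus (spectral decomposition), for Hermitian matrices. -/
noncomputable def mpow {n : Type*} [Fintype n] [DecidableEq n]
    (A : Matrix n n ℂ) (p : ℝ) : Matrix n n ℂ :=
  if hA : A.IsHermitian then
    (hA.eigenvectorUnitary : Matrix n n ℂ) *
      Matrix.diagonal (fun i => ((hA.eigenvalues i ^ p : ℝ) : ℂ)) *
      star (hA.eigenvectorUnitary : Matrix n n ℂ)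
  else 0

/-- Hellinger distance. -/
noncomputable def dh {n : Type*} [Fintype n] [DecidableEq n]
    (A B : Matrix n n ℂ) : ℝ :=
  Real.sqrt ((Matrix.trace (A + B)).re
    - 2 * (Matrix.trace (mpow A (1/2) * mpow B (1/2))).re)

/-- Bures–Wasserstein distance. -/
noncomputable def db {n : Type*} [Fintype n] [DecidableEq n]
    (A B : Matrix n n ℂ) : ℝ :=
  Real.sqrt ((Matrix.trace (A + B)).re
    - 2 * (Matrix.trace (mpow (mpow A (1/2) * B * mpow A (1/2)) (1/2))).re)

/-- Log-determinant distance. -/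
noncomputable def dl {n : Type*} [Fintype n] [DecidableEq n]
    (A B : Matrix n n ℂ) : ℝ :=
  Real.log (((A + B) / 2).det).re
    - (1/2) * (Real.log (A.det.re) + Real.log (B.det.re))

/-- Matrix power mean μ_p(t;A,B) = (t A^p + (1-t) B^p)^{1/p}. -/
noncomputable def mpm {n : Type*} [Fintype n] [DecidableEq n]
    (p t : ℝ) (A B : Matrix n n ℂ) : Matrix n n ℂ :=
  mpow ((t : ℂ) • mpow A p + ((1 - t : ℝ) : ℂ) • mpow B p) (1/p)

/-- Weighted geometric mean A ♯_t B. -/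
noncomputable def sharp {n : Type*} [Fintype n] [DecidableEq n]
    (t : ℝ) (A B : Matrix n n ℂ) : Matrix n n ℂ :=
  mpow A (1/2) * mpow (mpow A (-(1/2)) * B * mpow A (-(1/2))) t * mpow A (1/2)

/-- Quantum fidelity. -/
noncomputable def fid {n : Type*} [Fintype n] [DecidableEq n]
    (A B : Matrix n n ℂ) : ℝ :=
  ((Matrix.trace (mpow (mpow A (1/2) * B * mpow A (1/2)) (1/2))).re) ^ 2

/-!
Write `G = A ♯ B` and `M = (A + B) / 2`. Since `(det G)² = det A · det B`, the right-hand side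
equals `(log det M - log det G) / 2`, so the inequality reduces to
`det ((G + M) / 2) ≤ det M`. This follows from the monotonicity of the determinant in the
Loewner order and the matrix AM-GM inequality `G ≤ M`: with `S = A^(1/2)` and
`R = (A^(-1/2) B A^(-1/2))^(1/2)` one has `A = S S`, `B = S R² S`, `G = S R S`, hence
`M - G = ((R - 1) S)ᴴ ((R - 1) S) / 2`.
-/

open scoped MatrixOrder

namespace Matrix

variable {n : Type*} [Fintype n] [DecidableEq n]

theorem div_two_eq_smul {K : Type*} [Field K] [NeZero (2 : K)] (X : Matrix n n K) :
    X / 2 = (2⁻¹ : K) • X := by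
  have h : (2 : Matrix n n K)⁻¹ = (2⁻¹ : K) • 1 := by
    refine inv_eq_left_inv ?_
    rw [smul_mul_assoc, one_mul, ← diagonal_ofNat, ← diagonal_one, ← diagonal_smul]
    exact congrArg diagonal (funext fun _ => inv_mul_cancel₀ two_ne_zero)
  rw [div_eq_mul_inv, h, mul_smul_comm, mul_one]

section RCLike

variable {𝕜 : Type*} [RCLike 𝕜]

theorem IsHermitian.det_cfc {A : Matrix n n 𝕜} (hA : A.IsHermitian) (f : ℝ → ℝ) :
    (cfc f A).det = ∏ i, (f (hA.eigenvalues i) : 𝕜) := by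
  rw [hA.cfc_eq, IsHermitian.cfc, Unitary.conjStarAlgAut_apply, det_mul_right_comm,
    Unitary.mul_star_self_of_mem hA.eigenvectorUnitary.2, one_mul, det_diagonal]
  rfl

theorem PosSemidef.one_le_det_one_add {P : Matrix n n 𝕜} (hP : P.PosSemidef) :
    1 ≤ (1 + P).det := by
  have h : 1 + P = cfc (fun x : ℝ => 1 + x) P := by
    rw [cfc_const_add _ _ P, cfc_id' ℝ P, map_one]
  rw [h, hP.1.det_cfc]
  refine Finset.one_le_prod fun i _ => ?_
  rw [← RCLike.ofReal_one, RCLike.ofReal_le_ofReal]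
  exact le_add_of_nonneg_right (hP.eigenvalues_nonneg i)

theorem PosDef.add_div_two {X Y : Matrix n n 𝕜} (hX : X.PosDef) (hY : Y.PosDef) :
    ((X + Y) / 2).PosDef := by
  rw [div_two_eq_smul]
  exact (hX.add hY).smul (by norm_num)

theorem add_div_two_le {X Y : Matrix n n 𝕜} (h : X ≤ Y) : (X + Y) / 2 ≤ Y := by
  have h2 : Y - (2⁻¹ : 𝕜) • (X + Y) = (2⁻¹ : 𝕜) • (Y - X) := by module
  rw [le_iff, div_two_eq_smul, h2]
  exact (le_iff.1 h).smul (by norm_num : (0 : 𝕜) < 2⁻¹).le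

end RCLike

end Matrix

section mpow

variable {n : Type*} [Fintype n] [DecidableEq n] {A : Matrix n n ℂ}

theorem mpow_eq_cfc (hA : A.IsHermitian) (p : ℝ) : mpow A p = cfc (fun x : ℝ => x ^ p) A := by
  rw [hA.cfc_eq, IsHermitian.cfc, mpow, dif_pos hA, Unitary.conjStarAlgAut_apply]
  rfl

theorem isHermitian_mpow (A : Matrix n n ℂ) (p : ℝ) : (mpow A p).IsHermitian := by
  by_cases hA : A.IsHermitian
  · rw [mpow_eq_cfc hA]
    exact cfc_predicate _ A
  · rw [mpow, dif_neg hA]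
    exact isHermitian_zero

theorem mpow_zero (hA : A.IsHermitian) : mpow A 0 = 1 := by
  simp only [mpow_eq_cfc hA, Real.rpow_zero]
  exact cfc_const_one ℝ A

theorem mpow_one (hA : A.IsHermitian) : mpow A 1 = A := by
  simp only [mpow_eq_cfc hA, Real.rpow_one]
  exact cfc_id' ℝ A

theorem mpow_mul_mpow (hA : A.PosDef) (p q : ℝ) : mpow A p * mpow A q = mpow A (p + q) := by
  have hcont (f : ℝ → ℝ) : ContinuousOn f (spectrum ℝ A) :=
    (spectrum ℝ A).toFinite.continuousOn f
  rw [mpow_eq_cfc hA.1, mpow_eq_cfc hA.1, mpow_eq_cfc hA.1, ← cfc_mul _ _ A (hcont _) (hcont _)]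
  refine cfc_congr fun x hx => ?_
  obtain ⟨i, rfl⟩ := hA.1.spectrum_real_eq_range_eigenvalues ▸ hx
  exact (Real.rpow_add (hA.eigenvalues_pos i) p q).symm

theorem mpow_half_mul_mpow_half (hA : A.PosDef) : mpow A (1 / 2) * mpow A (1 / 2) = A := by
  rw [mpow_mul_mpow hA, add_halves, mpow_one hA.1]

theorem mpow_mul_mpow_neg (hA : A.PosDef) (p : ℝ) : mpow A p * mpow A (-p) = 1 := by
  rw [mpow_mul_mpow hA, add_neg_cancel, mpow_zero hA.1]

theorem mpow_neg_mul_mpow (hA : A.PosDef) (p : ℝ) : mpow A (-p) * mpow A p = 1 := by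
  rw [mpow_mul_mpow hA, neg_add_cancel, mpow_zero hA.1]

theorem mpow_mul_mpow_neg_conj (hA : A.PosDef) (p : ℝ) (B : Matrix n n ℂ) :
    mpow A p * (mpow A (-p) * B * mpow A (-p)) * mpow A p = B := by
  simp only [← Matrix.mul_assoc, mpow_mul_mpow_neg hA, Matrix.one_mul]
  rw [Matrix.mul_assoc, mpow_neg_mul_mpow hA, Matrix.mul_one]

theorem isUnit_mpow (hA : A.PosDef) (p : ℝ) : IsUnit (mpow A p) :=
  ⟨⟨mpow A p, mpow A (-p), mpow_mul_mpow_neg hA p, mpow_neg_mul_mpow hA p⟩, rfl⟩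

theorem Matrix.PosDef.mpow_mul_mul_mpow {B : Matrix n n ℂ} (hB : B.PosDef) (hA : A.PosDef)
    (p : ℝ) : (mpow A p * B * mpow A p).PosDef := by
  have h := (IsUnit.posDef_star_right_conjugate_iff (x := B) (isUnit_mpow hA p)).2 hB
  rwa [star_eq_conjTranspose, (isHermitian_mpow A p).eq] at h

theorem posDef_mpow (hA : A.PosDef) (p : ℝ) : (mpow A p).PosDef := by
  have h := (PosDef.one (n := n) (R := ℂ)).mpow_mul_mul_mpow hA (p / 2)
  rwa [Matrix.mul_one, mpow_mul_mpow hA, add_halves] at h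

end mpow

namespace Matrix

variable {n : Type*} [Fintype n] [DecidableEq n]

theorem PosDef.re_det_pos {X : Matrix n n ℂ} (hX : X.PosDef) : 0 < X.det.re :=
  (Complex.pos_iff.1 hX.det_pos).1

theorem PosDef.ofReal_re_det {X : Matrix n n ℂ} (hX : X.PosDef) : (X.det.re : ℂ) = X.det :=
  Complex.ext rfl (by simp [(Complex.pos_iff.1 hX.det_pos).2])

theorem PosDef.det_le_det_of_le {X Y : Matrix n n ℂ} (hX : X.PosDef) (h : X ≤ Y) :
    X.det ≤ Y.det := by
  set S := mpow X (1 / 2)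
  set P := mpow X (-(1 / 2)) * (Y - X) * mpow X (-(1 / 2)) with hP
  have hPpsd : P.PosSemidef := by
    simpa only [(isHermitian_mpow X _).eq] using
      (le_iff.1 h).mul_mul_conjTranspose_same (mpow X (-(1 / 2)))
  have hY : S * (1 + P) * S = Y := by
    rw [Matrix.mul_add, Matrix.add_mul, Matrix.mul_one, mpow_half_mul_mpow_half hX, hP,
      mpow_mul_mpow_neg_conj hX, add_sub_cancel]
  have hdet : S.det * S.det = X.det := by rw [← det_mul, mpow_half_mul_mpow_half hX]
  calc X.det = X.det * 1 := (mul_one _).symm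
    _ ≤ X.det * (1 + P).det := mul_le_mul_of_nonneg_left hPpsd.one_le_det_one_add hX.det_pos.le
    _ = Y.det := by rw [← hY, det_mul, det_mul, ← hdet]; ring

theorem PosDef.log_re_det_le_of_le {X Y : Matrix n n ℂ} (hX : X.PosDef) (h : X ≤ Y) :
    Real.log X.det.re ≤ Real.log Y.det.re :=
  Real.log_le_log hX.re_det_pos (Complex.le_def.1 (hX.det_le_det_of_le h)).1

end Matrix

section sharp

variable {n : Type*} [Fintype n] [DecidableEq n] {A B : Matrix n n ℂ}

theorem posDef_sharp (hA : A.PosDef) (hB : B.PosDef) (t : ℝ) : (sharp t A B).PosDef :=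
  (posDef_mpow (hB.mpow_mul_mul_mpow hA _) t).mpow_mul_mul_mpow hA _

theorem sharp_half_le_add_div_two (hA : A.PosDef) (hB : B.PosDef) :
    sharp (1 / 2) A B ≤ (A + B) / 2 := by
  set S := mpow A (1 / 2)
  set C := mpow A (-(1 / 2)) * B * mpow A (-(1 / 2)) with hC
  set R := mpow C (1 / 2)
  have hRR : R * R = C := mpow_half_mul_mpow_half (hB.mpow_mul_mul_mpow hA _)
  have hA' : A = S * S := (mpow_half_mul_mpow_half hA).symm
  have hB' : B = S * (R * R) * S := by rw [hRR, hC, mpow_mul_mpow_neg_conj hA]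
  have hsq : A + B - (2 : ℂ) • (S * R * S) = ((R - 1) * S)ᴴ * ((R - 1) * S) := by
    rw [conjTranspose_mul, conjTranspose_sub, conjTranspose_one, (isHermitian_mpow A _).eq,
      (isHermitian_mpow C _).eq, two_smul]
    nth_rewrite 1 [hA', hB']
    noncomm_ring
  have hdiff :
      (A + B) / 2 - sharp (1 / 2) A B = (2⁻¹ : ℂ) • (((R - 1) * S)ᴴ * ((R - 1) * S)) := by
    rw [div_two_eq_smul, ← hsq, smul_sub, smul_smul, inv_mul_cancel₀ two_ne_zero, one_smul]
    rfl
  rw [le_iff, hdiff]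
  exact (posSemidef_conjTranspose_mul_self _).smul (by norm_num : (0 : ℂ) < 2⁻¹).le

theorem det_sharp_half_sq (hA : A.PosDef) (hB : B.PosDef) :
    (sharp (1 / 2) A B).det ^ 2 = A.det * B.det := by
  set S := mpow A (1 / 2)
  set T := mpow A (-(1 / 2))
  set R := mpow (T * B * T) (1 / 2)
  have hRR : R * R = T * B * T := mpow_half_mul_mpow_half (hB.mpow_mul_mul_mpow hA _)
  have hSS : S * S = A := mpow_half_mul_mpow_half hA
  have hST : S * T = 1 := mpow_mul_mpow_neg hA _
  calc (S * R * S).det ^ 2 = (S * S).det * (R * R).det * (S * S).det := by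
        simp only [det_mul]; ring
    _ = (S * S).det * (S * T).det ^ 2 * B.det := by rw [hRR]; simp only [det_mul]; ring
    _ = A.det * B.det := by rw [hSS, hST, det_one]; ring

theorem log_re_det_sharp_half (hA : A.PosDef) (hB : B.PosDef) :
    Real.log (sharp (1 / 2) A B).det.re = (Real.log A.det.re + Real.log B.det.re) / 2 := by
  have hG := posDef_sharp hA hB (1 / 2)
  have hsq : (sharp (1 / 2) A B).det.re ^ 2 = A.det.re * B.det.re := by
    have h := det_sharp_half_sq hA hB
    rw [← hG.ofReal_re_det, ← hA.ofReal_re_det, ← hB.ofReal_re_det] at h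
    exact_mod_cast h
  have hlog := congrArg Real.log hsq
  rw [Real.log_pow, Real.log_mul hA.re_det_pos.ne' hB.re_det_pos.ne'] at hlog
  push_cast at hlog
  linarith

end sharp

theorem stmt16 {n : Type*} [Fintype n] [DecidableEq n]
    {A B : Matrix n n ℂ} (hA : A.PosDef) (hB : B.PosDef) :
    dl (sharp (1/2) A B) ((A + B) / 2) ≤ (1/2) * dl A B := by
  have hG := posDef_sharp hA hB (1 / 2)
  have hM := hA.add_div_two hB
  have hN := hG.add_div_two hM
  have hlog := hN.log_re_det_le_of_le (add_div_two_le (sharp_half_le_add_div_two hA hB))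
  have hGlog := log_re_det_sharp_half hA hB
  simp only [dl]
  linarith
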